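/- arXiv:2205.03531 — 4 statements merged into one kernel-verified Lean document; each statement's English description precedes it below -/
import Mathlib

section
/- Let (W,S) be a Coxeter system and let U ⊆ S be a subset with decomposition U = U_σ ∪ U_ν into the union of its finite-type irreducible components U_σ and infinite-type irreducible components U_ν. If w ∈ W satisfies wUw^{-1} = U, then wU_σ w^{-1} = U_σ and wU_ν w^{-1} = U_ν. -/
namespace CoxPaper

variable {W : Type} [Group W]

/-- `S` is a Coxeter generating set for the group `W`. -/
def IsCoxeterGeneratingSet (S : Set W) : Prop :=
  ∃ (B : Type) (M : CoxeterMatrix B) (cs : CoxeterSystem M W),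
    Set.range cs.simple = S

/-- Word length of `w` with respect to a generating set `S` consisting of involutions. -/
noncomputable def wlen (S : Set W) (w : W) : ℕ :=
  sInf {n | ∃ l : List W, l.length = n ∧ (∀ x ∈ l, x ∈ S) ∧ l.prod = w}

/-- `T` is spherical: the subgroup it generates is finite. -/
def Spherical (T : Set W) : Prop :=
  ((Subgroup.closure T : Subgroup W) : Set W).Finite

/-- `w₀` is a longest element (w.r.t. `S`-length) of the standard parabolic subgroup
generated by `T`. -/
def IsLongest (S T : Set W) (w₀ : W) : Prop :=
  w₀ ∈ Subgroup.closure T ∧ ∀ v ∈ Subgroup.closure T, wlen S v ≤ wlen S w₀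

/-- Conjugation by `w`. -/
def conj (w : W) : W → W := fun x => w * x * w⁻¹

/-- Adjacency in the nerve graph restricted to `A`: distinct elements whose product has
finite order. -/
def Adj (A : Set W) (s t : W) : Prop :=
  s ∈ A ∧ t ∈ A ∧ s ≠ t ∧ orderOf (s * t) ≠ 0

/-- `A` is connected (in the nerve graph). -/
def Conn (A : Set W) : Prop :=
  ∀ a ∈ A, ∀ b ∈ A, Relation.ReflTransGen (Adj A) a b

/-- The connected component of `x` inside `A`. -/
def Comp (A : Set W) (x : W) : Set W :=
  {y | y ∈ A ∧ Relation.ReflTransGen (Adj A) x y}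

/-- `X` is a connected component of `A`. -/
def IsCC (A X : Set W) : Prop := ∃ x ∈ A, X = Comp A x

/-- `σ^⊥`: the elements of `S` commuting with every element of `σ`. -/
def Perp (S σ : Set W) : Set W := {s ∈ S | ∀ t ∈ σ, s * t = t * s}

/-- `U` is a spherical-product subset of `S`. -/
def SphericalProduct (S U : Set W) : Prop :=
  U.Nonempty ∧ ∃ σ, σ ⊆ S ∧ σ.Nonempty ∧ Spherical σ ∧ U ⊆ σ ∪ Perp S σ

/-- `U` separates `A`: `A` is connected and `A − U` is not connected. -/
def Separates (A U : Set W) : Prop := Conn A ∧ ¬ Conn (A \ U)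

/-- `A` is a twist-rigid subset of `S`. -/
def TwistRigid (S A : Set W) : Prop :=
  A ⊆ S ∧ Conn A ∧
    ¬ ∃ U, SphericalProduct S U ∧ Separates S U ∧ Separates A (U ∩ A)

/-- `A` is a maximal twist-rigid subset of `S`. -/
def MaxTwistRigid (S A : Set W) : Prop :=
  TwistRigid S A ∧ ∀ A', TwistRigid S A' → A ⊆ A' → A' = A

/-- Prefix union `A 0 ∪ ⋯ ∪ A (i-1)`. -/
def PU (A : ℕ → Set W) (i : ℕ) : Set W := ⋃ j ∈ Finset.range i, A j

/-- The maximal-intersection chain condition on the sequence `A 0, …, A (n-1)` from `𝒜`: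
for each `0 < i < n`, the set `(A 0 ∪ ⋯ ∪ A (i-1)) ∩ A i` is maximal among the intersections
`(A 0 ∪ ⋯ ∪ A (i-1)) ∩ C` for `C ∈ 𝒜 − {A 0, …, A (i-1)}`. -/
def ChainCond (𝒜 : Set (Set W)) (A : ℕ → Set W) (n : ℕ) : Prop :=
  ∀ i, 0 < i → i < n → ∀ C ∈ 𝒜, (∀ j < i, A j ≠ C) →
    ¬ (PU A i ∩ A i ⊂ PU A i ∩ C)

/-- The thickened component `X̄ := ⋃ {A ∈ 𝒜 : A ⊆ X ∪ U}`. -/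
def Thicken (𝒜 : Set (Set W)) (U X : Set W) : Set W :=
  ⋃₀ {A | A ∈ 𝒜 ∧ A ⊆ X ∪ U}

/-- `U` is a separator of `𝒜` (conditions (i)–(v) of the paper). -/
def IsSeparator (S : Set W) (𝒜 : Set (Set W)) (U : Set W) : Prop :=
  SphericalProduct S U ∧ Separates S U ∧
  (∀ A ∈ 𝒜, ∃! X, IsCC (S \ U) X ∧ A ⊆ Thicken 𝒜 U X) ∧
  (∃ A₁ ∈ 𝒜, ∃ A₂ ∈ 𝒜, A₁ ∩ A₂ = U ∧
    ∃ X₁ X₂, IsCC (S \ U) X₁ ∧ IsCC (S \ U) X₂ ∧ X₁ ≠ X₂ ∧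
      A₁ ⊆ Thicken 𝒜 U X₁ ∧ A₂ ⊆ Thicken 𝒜 U X₂) ∧
  (∀ X, IsCC (S \ U) X →
    ∀ (A : ℕ → Set W) (n : ℕ), 0 < n → (∀ i < n, A i ∈ 𝒜) →
      (∀ i < n, ∀ j < n, A i = A j → i = j) →
      ChainCond 𝒜 A n →
      U ∩ Thicken 𝒜 U X ⊆ PU A n → PU A n ⊆ Thicken 𝒜 U X →
      ∃ i < n, U ∩ Thicken 𝒜 U X ⊆ A i)

/-- `U` splits `C` and `D` into two different connected components of `S − U`. -/
def SplitsPair (S U C D : Set W) : Prop :=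
  ∃ X₁ X₂, IsCC (S \ U) X₁ ∧ IsCC (S \ U) X₂ ∧ X₁ ≠ X₂ ∧
    C ⊆ X₁ ∪ U ∧ D ⊆ X₂ ∪ U

/-- Condition (4) in the definition of a separation: every maximal-intersection chain
produces separators which split the pieces. -/
def SepCond4 (S : Set W) (𝒜 : Set (Set W)) : Prop :=
  ∀ (A : ℕ → Set W) (n : ℕ), (∀ i < n, A i ∈ 𝒜) →
    (∀ i < n, ∀ j < n, A i = A j → i = j) → ChainCond 𝒜 A n →
    ∀ i, 0 < i → i < n →
      IsSeparator S 𝒜 (PU A i ∩ A i) ∧ SplitsPair S (PU A i ∩ A i) (PU A i) (A i)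

/-- `𝒜` is a separation of the connected set `S`. -/
def Separation (S : Set W) (𝒜 : Set (Set W)) : Prop :=
  ⋃₀ 𝒜 = S ∧
  (∀ A ∈ 𝒜, Conn A ∧ ∃ ℬ : Set (Set W), (∀ C ∈ ℬ, MaxTwistRigid S C) ∧ A = ⋃₀ ℬ) ∧
  (∀ A₀, MaxTwistRigid S A₀ → ∃! A, A ∈ 𝒜 ∧ A₀ ⊆ A) ∧
  SepCond4 S 𝒜

/-- `𝒜` is a minimal separation of `S` with respect to the refinement order. -/
def MinSeparation (S : Set W) (𝒜 : Set (Set W)) : Prop :=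
  Separation S 𝒜 ∧
  ∀ 𝒜', Separation S 𝒜' → (∀ A' ∈ 𝒜', ∃ A ∈ 𝒜, A' ⊆ A) → 𝒜' = 𝒜

/-- `A ∼ A′`: some minimal separation of `S` has a member containing `A ∪ A′`. -/
def Sim (S : Set W) (A A' : Set W) : Prop :=
  ∃ 𝒜, MinSeparation S 𝒜 ∧ ∃ C ∈ 𝒜, A ∪ A' ⊆ C

/-- The standard separation `Ã_S`: unions of `∼`-equivalence classes of maximal twist-rigid
subsets of `S`. -/
def StdSep (S : Set W) : Set (Set W) :=
  {C | ∃ A, MaxTwistRigid S A ∧ C = ⋃₀ {A' | MaxTwistRigid S A' ∧ Sim S A A'}}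

/-- `A` is a type(I) subset of `S`. -/
def TypeI (S A : Set W) : Prop :=
  A ∈ StdSep S ∧ ∀ 𝒜, MinSeparation S 𝒜 → A ∈ 𝒜

/-- `A` is a type(II) subset of `S`. -/
def TypeII (S A : Set W) : Prop := A ∈ StdSep S ∧ ¬ TypeI S A

/-- Adjacency in the Coxeter graph restricted to `U`: noncommuting elements of `U`. -/
def CAdj (U : Set W) (s t : W) : Prop := s ∈ U ∧ t ∈ U ∧ s * t ≠ t * s

/-- The irreducible component of `x` in `U` (component of the Coxeter graph). -/
def CComp (U : Set W) (x : W) : Set W :=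
  {y | y ∈ U ∧ Relation.ReflTransGen (CAdj U) x y}

/-- `U_σ`: the union of the irreducible components of `U` generating finite groups. -/
def SphPart (U : Set W) : Set W := {s ∈ U | Spherical (CComp U s)}

/-- `U_ν`: the union of the irreducible components of `U` generating infinite groups. -/
def InfPart (U : Set W) : Set W := {s ∈ U | ¬ Spherical (CComp U s)}

/-- `T` is a maximal spherical subset of `S`. -/
def IsMaxSpherical (S T : Set W) : Prop :=
  T ⊆ S ∧ Spherical T ∧ ∀ T', T' ⊆ S → Spherical T' → T ⊆ T' → T' = T

/-- `S` and `S'` are angle-compatible. -/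
def AngleCompatible (S S' : Set W) : Prop :=
  ∀ a ∈ S, ∀ b ∈ S, a ≠ b → orderOf (a * b) ≠ 0 →
    ∃ a' ∈ S', ∃ b' ∈ S', a' ≠ b' ∧ orderOf (a' * b') ≠ 0 ∧
      ∃ w : W, conj w '' {a, b} = {a', b'}

/-- Every maximal spherical subset of `S` is conjugate to a maximal spherical subset of `S'`. -/
def MaxSphericalCompatible (S S' : Set W) : Prop :=
  ∀ T, IsMaxSpherical S T → ∃ T', IsMaxSpherical S' T' ∧ ∃ w : W, conj w '' T = T'

/-- `G` is the internal amalgamated product of its subgroups `H` and `L` over `K`,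
expressed via the universal property of the pushout together with `H ⊔ L = G`. -/
def IsAmalgam (K H L G : Subgroup W) : Prop :=
  ∃ (hKH : K ≤ H) (hKL : K ≤ L) (hH : H ≤ G) (hL : L ≤ G),
    H ⊔ L = G ∧
    ∀ (P : Type) [Group P] (f : H →* P) (g : L →* P),
      f.comp (Subgroup.inclusion hKH) = g.comp (Subgroup.inclusion hKL) →
      ∃! h : G →* P, h.comp (Subgroup.inclusion hH) = f ∧ h.comp (Subgroup.inclusion hL) = g

lemma mem_iff_equiv {W : Type} [Group W] (e : W ≃* W) {U : Set W}
    (hU : e '' U = U) (x : W) : x ∈ U ↔ e x ∈ U := by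
  constructor
  · intro h; rw [← hU]; exact ⟨x, h, rfl⟩
  · intro h; rw [← hU] at h
    obtain ⟨y, hy, hxy⟩ := h
    rwa [← e.injective hxy]

lemma cadj_iff_equiv {W : Type} [Group W] (e : W ≃* W) {U : Set W}
    (hU : e '' U = U) (s t : W) : CAdj U (e s) (e t) ↔ CAdj U s t := by
  unfold CAdj
  rw [← mem_iff_equiv e hU s, ← mem_iff_equiv e hU t, ← map_mul, ← map_mul,
    e.injective.ne_iff]

lemma rtg_equiv {W : Type} [Group W] (e : W ≃* W) {U : Set W}
    (hU : e '' U = U) {x y : W} (h : Relation.ReflTransGen (CAdj U) x y) :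
    Relation.ReflTransGen (CAdj U) (e x) (e y) := by
  induction h with
  | refl => exact Relation.ReflTransGen.refl
  | tail _ hbc ih => exact ih.tail ((cadj_iff_equiv e hU _ _).2 hbc)

lemma rtg_iff_equiv {W : Type} [Group W] (e : W ≃* W) {U : Set W}
    (hU : e '' U = U) (x y : W) :
    Relation.ReflTransGen (CAdj U) (e x) (e y) ↔ Relation.ReflTransGen (CAdj U) x y := by
  constructor
  · intro h
    have hU' : e.symm '' U = U := by
      conv_lhs => rw [← hU]
      simp [Set.image_image]
    have := rtg_equiv e.symm hU' h
    simpa using this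
  · exact rtg_equiv e hU

lemma ccomp_equiv {W : Type} [Group W] (e : W ≃* W) {U : Set W}
    (hU : e '' U = U) (x : W) : e '' CComp U x = CComp U (e x) := by
  ext z
  constructor
  · rintro ⟨y, ⟨hyU, hxy⟩, rfl⟩
    exact ⟨(mem_iff_equiv e hU y).1 hyU, rtg_equiv e hU hxy⟩
  · rintro ⟨hzU, hxz⟩
    refine ⟨e.symm z, ⟨?_, ?_⟩, by simp⟩
    · rw [mem_iff_equiv e hU]; simpa
    · rw [← rtg_iff_equiv e hU]; simpa
  
lemma spherical_iff_equiv {W : Type} [Group W] (e : W ≃* W) (T : Set W) :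
    Spherical (e '' T) ↔ Spherical T := by
  unfold Spherical
  have h : Subgroup.closure (e '' T) = (Subgroup.closure T).map e.toMonoidHom := by
    rw [MonoidHom.map_closure]; rfl
  rw [h]
  have h2 : ((Subgroup.closure T).map e.toMonoidHom : Set W)
      = e '' (Subgroup.closure T : Set W) := rfl
  rw [h2]
  constructor
  · intro hf
    exact Set.Finite.of_finite_image hf (e.injective.injOn)
  · exact fun hf => hf.image _

theorem statement_4 {B : Type} {W : Type} [Group W] {M : CoxeterMatrix B}
    (cs : CoxeterSystem M W) (S : Set W) (hS : S = Set.range cs.simple)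
    (U : Set W) (hUS : U ⊆ S) (w : W) (hw : conj w '' U = U) :
    conj w '' SphPart U = SphPart U ∧ conj w '' InfPart U = InfPart U := by
  set e : W ≃* W := MulAut.conj w with he
  have hce : conj w = ⇑e := by
    funext x; simp [conj, he, mul_assoc]
  rw [hce] at hw ⊢
  have key : ∀ x : W, x ∈ SphPart U ↔ e x ∈ SphPart U := by
    intro x
    unfold SphPart
    rw [Set.mem_setOf_eq, Set.mem_setOf_eq, ← mem_iff_equiv e hw x,
      ← ccomp_equiv e hw x, spherical_iff_equiv e]
  have key2 : ∀ x : W, x ∈ InfPart U ↔ e x ∈ InfPart U := by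
    intro x
    unfold InfPart
    rw [Set.mem_setOf_eq, Set.mem_setOf_eq, ← mem_iff_equiv e hw x,
      ← ccomp_equiv e hw x, spherical_iff_equiv e]
  constructor
  · ext z
    constructor
    · rintro ⟨y, hy, rfl⟩; exact (key y).1 hy
    · intro hz; exact ⟨e.symm z, by rw [key]; simpa, by simp⟩
  · ext z
    constructor
    · rintro ⟨y, hy, rfl⟩; exact (key2 y).1 hy
    · intro hz; exact ⟨e.symm z, by rw [key2]; simpa, by simp⟩

end CoxPaper
end

section
/- Let W be a group with Coxeter generating sets S and S′. If (W,S) and (W,S′) are maximal-spherical-subset-compatible, then S and S′ are angle-compatible. -/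
namespace CoxPaper

variable {W : Type} [Group W]

/-- The subgroup generated by two involutions whose product has finite order is finite. -/
lemma dihedral_finite {a b : W} (ha : a * a = 1) (hb : b * b = 1)
    (h : orderOf (a * b) ≠ 0) :
    ((Subgroup.closure {a, b} : Subgroup W) : Set W).Finite := by
  have hainv : a⁻¹ = a := inv_eq_of_mul_eq_one_right ha
  have hbinv : b⁻¹ = b := inv_eq_of_mul_eq_one_right hb
  have hfo : IsOfFinOrder (a * b) := orderOf_pos_iff.mp (Nat.pos_of_ne_zero h)
  set H := Subgroup.zpowers (a * b) with hHdef
  have hHfin : ((H : Subgroup W) : Set W).Finite := finite_zpowers.2 hfo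
  have hconj1 : a * (a * b) * a = (a * b)⁻¹ := by
    rw [mul_inv_rev, hainv, hbinv, ← mul_assoc, ha, one_mul]
  have key : ∀ x ∈ H, a * x * a ∈ H := by
    rintro x ⟨k, rfl⟩
    refine ⟨-k, ?_⟩
    have h2 := map_zpow (MulAut.conj a) (a * b) k
    simp only [MulAut.conj_apply, hainv] at h2
    show (a * b) ^ (-k) = a * (a * b) ^ k * a
    rw [h2, hconj1, inv_zpow, ← zpow_neg]
  have hsub : ((Subgroup.closure {a, b} : Subgroup W) : Set W) ⊆
      (H : Set W) ∪ (fun x => a * x) '' (H : Set W) := by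
    intro x hx
    induction hx using Subgroup.closure_induction with
    | mem y hy =>
      simp only [Set.mem_insert_iff, Set.mem_singleton_iff] at hy
      rcases hy with h1 | h1
      · refine Or.inr ⟨1, H.one_mem, ?_⟩
        show a * 1 = y
        rw [mul_one, h1]
      · refine Or.inr ⟨a * b, ⟨1, zpow_one _⟩, ?_⟩
        show a * (a * b) = y
        rw [← mul_assoc, ha, one_mul, h1]
    | one => exact Or.inl H.one_mem
    | mul u v hu hv ihu ihv =>
      rcases ihu with hu' | ⟨h1, h1H, rfl⟩
      · rcases ihv with hv' | ⟨h2, h2H, rfl⟩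
        · exact Or.inl (H.mul_mem hu' hv')
        · refine Or.inr ⟨(a * u * a) * h2, H.mul_mem (key u hu') h2H, ?_⟩
          show a * (a * u * a * h2) = u * (a * h2)
          rw [show a * (a * u * a * h2) = (a * a) * (u * (a * h2)) by group, ha, one_mul]
      · rcases ihv with hv' | ⟨h2, h2H, rfl⟩
        · refine Or.inr ⟨h1 * v, H.mul_mem h1H hv', ?_⟩
          show a * (h1 * v) = a * h1 * v
          rw [mul_assoc]
        · refine Or.inl ?_
          show (a * h1) * (a * h2) ∈ H
          rw [show (a * h1) * (a * h2) = (a * h1 * a) * h2 by group]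
          exact H.mul_mem (key h1 h1H) h2H
    | inv u hu ihu =>
      rcases ihu with hu' | ⟨h1, h1H, rfl⟩
      · exact Or.inl (H.inv_mem hu')
      · refine Or.inr ⟨a * h1⁻¹ * a, key _ (H.inv_mem h1H), ?_⟩
        show a * (a * h1⁻¹ * a) = (a * h1)⁻¹
        rw [mul_inv_rev, hainv, show a * (a * h1⁻¹ * a) = (a * a) * (h1⁻¹ * a) by group,
          ha, one_mul]
  exact (hHfin.union (hHfin.image _)).subset hsub


/-- Any spherical subset of a finite set `S` extends to a maximal spherical subset. -/
lemma exists_maxSpherical {S T₀ : Set W} (hfin : S.Finite) (hT₀S : T₀ ⊆ S)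
    (hsph : Spherical T₀) : ∃ T, IsMaxSpherical S T ∧ T₀ ⊆ T := by
  set F : Set (Set W) := {T | T ⊆ S ∧ Spherical T ∧ T₀ ⊆ T} with hF
  have hFfin : F.Finite := hfin.finite_subsets.subset (fun T hT => hT.1)
  have hFne : F.Nonempty := ⟨T₀, hT₀S, hsph, subset_rfl⟩
  obtain ⟨T, hTF, hmax⟩ : ∃ T ∈ F, ∀ T' ∈ F, T ⊆ T' → T = T' := by
    obtain ⟨T, hTF, hmax⟩ := Set.Finite.exists_maximalFor id F hFfin hFne
    exact ⟨T, hTF, fun T' hT' h => le_antisymm h (hmax hT' h)⟩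
  refine ⟨T, ⟨hTF.1, hTF.2.1, ?_⟩, hTF.2.2⟩
  intro T' hT'S hT'sph hTT'
  exact (hmax T' ⟨hT'S, hT'sph, hTF.2.2.trans hTT'⟩ hTT').symm

theorem statement_7 {B B' : Type} {W : Type} [Group W]
    {M : CoxeterMatrix B} {M' : CoxeterMatrix B'}
    (cs : CoxeterSystem M W) (cs' : CoxeterSystem M' W)
    (S S' : Set W) (hS : S = Set.range cs.simple) (hS' : S' = Set.range cs'.simple)
    (hfin : S.Finite) (hfin' : S'.Finite)
    (hcomp : MaxSphericalCompatible S S') :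
    AngleCompatible S S' := by
  intro a ha b hb hab hord
  have ha2 : a * a = 1 := by
    rw [hS] at ha; obtain ⟨i, hi⟩ := ha; rw [← hi]; exact cs.simple_mul_simple_self i
  have hb2 : b * b = 1 := by
    rw [hS] at hb; obtain ⟨i, hi⟩ := hb; rw [← hi]; exact cs.simple_mul_simple_self i
  have hpairS : ({a, b} : Set W) ⊆ S := by
    intro x hx; rcases hx with rfl | hx
    · exact ha
    · rw [Set.mem_singleton_iff] at hx; rw [hx]; exact hb
  have hsph : Spherical ({a, b} : Set W) := dihedral_finite ha2 hb2 hord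
  obtain ⟨T, hTmax, habT⟩ := exists_maxSpherical hfin hpairS hsph
  obtain ⟨T', hT'max, w, hw⟩ := hcomp T hTmax
  have haT : a ∈ T := habT (Set.mem_insert a _)
  have hbT : b ∈ T := habT (Set.mem_insert_of_mem a rfl)
  refine ⟨conj w a, hT'max.1 (hw ▸ Set.mem_image_of_mem _ haT),
    conj w b, hT'max.1 (hw ▸ Set.mem_image_of_mem _ hbT), ?_, ?_, w, Set.image_pair _ _ _⟩
  · intro hcc
    apply hab
    have := mul_right_cancel hcc
    exact mul_left_cancel this
  · have hmul : conj w a * conj w b = (MulAut.conj w) (a * b) := by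
      show (w * a * w⁻¹) * (w * b * w⁻¹) = w * (a * b) * w⁻¹
      group
    have h3 := orderOf_injective (MulAut.conj w).toMonoidHom (MulAut.conj w).injective (a * b)
    simp only [MulEquiv.coe_toMonoidHom] at h3
    rw [hmul, h3]
    exact hord

end CoxPaper
end

section
/- Let (W,S) be a Coxeter system where S is not connected, say S = X ∪ Y is a partition with o(xy) = ∞ for all x ∈ X, y ∈ Y. Then W is the free product W_X * W_Y, and for any w ∈ W_X the set S′ := X ∪ (w Y w^{-1}) is again a Coxeter generating set for W, with (W,S′) isomorphic as a Coxeter system to (W,S). -/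
namespace CoxPaper

variable {W : Type} [Group W]

theorem statement_9 {B : Type} {W : Type} [Group W] {M : CoxeterMatrix B}
    (cs : CoxeterSystem M W) (S : Set W) (hS : S = Set.range cs.simple)
    (X Y : Set W) (hXY : S = X ∪ Y) (hdisj : Disjoint X Y)
    (hXne : X.Nonempty) (hYne : Y.Nonempty)
    (hinf : ∀ x ∈ X, ∀ y ∈ Y, orderOf (x * y) = 0) :
    Function.Bijective
      (Monoid.Coprod.lift (Subgroup.closure X).subtype (Subgroup.closure Y).subtype) ∧
    ∀ w ∈ Subgroup.closure X,
      IsCoxeterGeneratingSet (X ∪ conj w '' Y) ∧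
      ∃ φ : W ≃* W, (⇑φ) '' S = X ∪ conj w '' Y := by
  classical
  have hSX : X ⊆ S := hXY ▸ Set.subset_union_left
  have hSY : Y ⊆ S := hXY ▸ Set.subset_union_right
  have hmem : ∀ b, cs.simple b ∈ X ∨ cs.simple b ∈ Y := by
    intro b
    have : cs.simple b ∈ S := hS ▸ Set.mem_range_self b
    rw [hXY] at this; exact this
  have hM0 : ∀ b b', cs.simple b ∈ X → cs.simple b' ∈ Y → M b b' = 0 := by
    intro b b' hb hb'
    have h1 := cs.simple_mul_simple_pow b b'
    have h2 := hinf _ hb _ hb'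
    have h3 := orderOf_dvd_of_pow_eq_one h1
    rw [h2] at h3
    exact Nat.eq_zero_of_zero_dvd h3
  have hM0' : ∀ b b', cs.simple b ∈ Y → cs.simple b' ∈ X → M b b' = 0 := by
    intro b b' hb hb'
    rw [M.symmetric]
    exact hM0 _ _ hb' hb
  have hnotX : ∀ {y : W}, y ∈ Y → y ∉ X := fun hy => Set.disjoint_right.mp hdisj hy
  -- Part 1: the free product decomposition
  set H : Subgroup W := Subgroup.closure X with hH
  set K : Subgroup W := Subgroup.closure Y with hK
  set L : Monoid.Coprod H K →* W := Monoid.Coprod.lift H.subtype K.subtype with hL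
  let fgen : B → Monoid.Coprod H K := fun b =>
    if h : cs.simple b ∈ X then Monoid.Coprod.inl ⟨_, Subgroup.subset_closure h⟩
    else Monoid.Coprod.inr ⟨_, Subgroup.subset_closure ((hmem b).resolve_left h)⟩
  have hlift : M.IsLiftable fgen := by
    intro b b'
    by_cases hb : cs.simple b ∈ X <;> by_cases hb' : cs.simple b' ∈ X
    · have h1 : ((⟨cs.simple b, Subgroup.subset_closure hb⟩ : H) *
          ⟨cs.simple b', Subgroup.subset_closure hb'⟩) ^ M b b' = 1 := by
        apply Subtype.ext
        push_cast
        exact cs.simple_mul_simple_pow b b'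
      simp only [fgen, dif_pos hb, dif_pos hb', ← map_mul, ← map_pow, h1, map_one]
    · rw [hM0 b b' hb ((hmem b').resolve_left hb'), pow_zero]
    · rw [hM0' b b' ((hmem b).resolve_left hb) hb', pow_zero]
    · have h1 : ((⟨cs.simple b, Subgroup.subset_closure ((hmem b).resolve_left hb)⟩ : K) *
          ⟨cs.simple b', Subgroup.subset_closure ((hmem b').resolve_left hb')⟩) ^ M b b' = 1 := by
        apply Subtype.ext
        push_cast
        exact cs.simple_mul_simple_pow b b'
      simp only [fgen, dif_neg hb, dif_neg hb', ← map_mul, ← map_pow, h1, map_one]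
  set f : W →* Monoid.Coprod H K := cs.lift ⟨fgen, hlift⟩ with hf
  have hfX : ∀ x (hx : x ∈ X), f x = Monoid.Coprod.inl ⟨x, Subgroup.subset_closure hx⟩ := by
    intro x hx
    obtain ⟨b, rfl⟩ : ∃ b, cs.simple b = x := by
      have : x ∈ Set.range cs.simple := hS ▸ hSX hx
      exact this
    rw [hf, cs.lift_apply_simple hlift b]
    simp only [fgen, dif_pos hx]
  have hfY : ∀ y (hy : y ∈ Y), f y = Monoid.Coprod.inr ⟨y, Subgroup.subset_closure hy⟩ := by
    intro y hy
    obtain ⟨b, rfl⟩ : ∃ b, cs.simple b = y := by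
      have : y ∈ Set.range cs.simple := hS ▸ hSY hy
      exact this
    rw [hf, cs.lift_apply_simple hlift b]
    simp only [fgen, dif_neg (hnotX hy)]
  have hLf : L.comp f = MonoidHom.id W := by
    apply cs.ext_simple
    intro b
    rcases hmem b with h | h
    · rw [MonoidHom.comp_apply, hfX _ h, MonoidHom.id_apply, hL,
        Monoid.Coprod.lift_apply_inl, Subgroup.coe_subtype]
    · rw [MonoidHom.comp_apply, hfY _ h, MonoidHom.id_apply, hL,
        Monoid.Coprod.lift_apply_inr, Subgroup.coe_subtype]
  have hfL : f.comp L = MonoidHom.id _ := by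
    apply Monoid.Coprod.hom_ext
    · ext ⟨x, hx⟩
      simp only [MonoidHom.comp_apply, MonoidHom.id_apply, hL, Monoid.Coprod.lift_apply_inl,
        Subgroup.coe_subtype]
      induction hx using Subgroup.closure_induction with
      | mem x hx => exact hfX x hx
      | one => rw [map_one, show (⟨1, one_mem _⟩ : Subgroup.closure X) = 1 from rfl, map_one]
      | mul x y hx hy ihx ihy =>
          rw [map_mul, ihx, ihy, ← map_mul]
          rfl
      | inv x hx ihx =>
          rw [map_inv, ihx, ← map_inv]
          rfl
    · ext ⟨y, hy⟩
      simp only [MonoidHom.comp_apply, MonoidHom.id_apply, hL, Monoid.Coprod.lift_apply_inr,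
        Subgroup.coe_subtype]
      induction hy using Subgroup.closure_induction with
      | mem y hy => exact hfY y hy
      | one => rw [map_one, show (⟨1, one_mem _⟩ : Subgroup.closure Y) = 1 from rfl, map_one]
      | mul x y hx hy ihx ihy =>
          rw [map_mul, ihx, ihy, ← map_mul]
          rfl
      | inv x hx ihx =>
          rw [map_inv, ihx, ← map_inv]
          rfl
  constructor
  · constructor
    · intro a b hab
      have ha := DFunLike.congr_fun hfL a
      have hb := DFunLike.congr_fun hfL b
      simp only [MonoidHom.comp_apply, MonoidHom.id_apply] at ha hb
      rw [← ha, ← hb, hab]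
    · intro v
      refine ⟨f v, ?_⟩
      have := DFunLike.congr_fun hLf v
      simpa only [MonoidHom.comp_apply, MonoidHom.id_apply] using this
  -- Part 2: partial conjugation
  · intro w hw
    have key : ∀ u : W, u ∈ Subgroup.closure X → ∃ ψ : W →* W,
        (∀ b, cs.simple b ∈ X → ψ (cs.simple b) = cs.simple b) ∧
        (∀ b, cs.simple b ∉ X → ψ (cs.simple b) = u * cs.simple b * u⁻¹) ∧
        (∀ v ∈ Subgroup.closure X, ψ v = v) := by
      intro u hu
      let g : B → W := fun b => if cs.simple b ∈ X then cs.simple b else u * cs.simple b * u⁻¹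
      have hg : M.IsLiftable g := by
        intro b b'
        by_cases hb : cs.simple b ∈ X <;> by_cases hb' : cs.simple b' ∈ X
        · simp only [g, if_pos hb, if_pos hb']
          exact cs.simple_mul_simple_pow b b'
        · rw [hM0 b b' hb ((hmem b').resolve_left hb'), pow_zero]
        · rw [hM0' b b' ((hmem b).resolve_left hb) hb', pow_zero]
        · simp only [g, if_neg hb, if_neg hb']
          have h1 : (u * cs.simple b * u⁻¹) * (u * cs.simple b' * u⁻¹)
              = u * (cs.simple b * cs.simple b') * u⁻¹ := by group
          rw [h1, conj_pow, cs.simple_mul_simple_pow, mul_one, mul_inv_cancel]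
      refine ⟨cs.lift ⟨g, hg⟩, ?_, ?_, ?_⟩
      · intro b hb
        rw [cs.lift_apply_simple hg b]
        simp only [g, if_pos hb]
      · intro b hb
        rw [cs.lift_apply_simple hg b]
        simp only [g, if_neg hb]
      · intro v hv
        induction hv using Subgroup.closure_induction with
        | mem x hx =>
            obtain ⟨b, rfl⟩ : ∃ b, cs.simple b = x := by
              have : x ∈ Set.range cs.simple := hS ▸ hSX hx
              exact this
            rw [cs.lift_apply_simple hg b]
            simp only [g, if_pos hx]
        | one => exact map_one _
        | mul x y hx hy ihx ihy => rw [map_mul, ihx, ihy]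
        | inv x hx ihx => rw [map_inv, ihx]
    obtain ⟨ψ, hψX, hψY, hψfix⟩ := key w hw
    obtain ⟨ψ', hψ'X, hψ'Y, hψ'fix⟩ := key w⁻¹ (inv_mem hw)
    have h1 : ψ.comp ψ' = MonoidHom.id W := by
      apply cs.ext_simple
      intro b
      by_cases hb : cs.simple b ∈ X
      · rw [MonoidHom.comp_apply, hψ'X b hb, hψX b hb, MonoidHom.id_apply]
      · rw [MonoidHom.comp_apply, hψ'Y b hb, inv_inv, MonoidHom.id_apply, map_mul, map_mul,
          hψY b hb, hψfix _ (inv_mem hw), hψfix _ hw]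
        group
    have h2 : ψ'.comp ψ = MonoidHom.id W := by
      apply cs.ext_simple
      intro b
      by_cases hb : cs.simple b ∈ X
      · rw [MonoidHom.comp_apply, hψX b hb, hψ'X b hb, MonoidHom.id_apply]
      · rw [MonoidHom.comp_apply, hψY b hb, MonoidHom.id_apply, map_mul, map_mul,
          hψ'Y b hb, inv_inv, hψ'fix _ (inv_mem hw), hψ'fix _ hw]
        group
    let φ : W ≃* W := ψ.toMulEquiv ψ' h2 h1
    have hφ : ∀ x, φ x = ψ x := fun _ => rfl
    have himg : (⇑φ) '' S = X ∪ conj w '' Y := by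
      rw [hXY, Set.image_union]
      congr 1
      · have hEq : Set.EqOn (⇑φ) id X := fun x hx => hψfix x (Subgroup.subset_closure hx)
        rw [Set.image_congr hEq, Set.image_id]
      · apply Set.image_congr
        intro y hy
        obtain ⟨b, rfl⟩ : ∃ b, cs.simple b = y := by
          have : y ∈ Set.range cs.simple := hS ▸ hSY hy
          exact this
        rw [hφ, hψY b (hnotX hy)]
        rfl
    refine ⟨⟨B, M, cs.map φ, ?_⟩, φ, himg⟩
    have : (cs.map φ).simple = ⇑φ ∘ cs.simple := by
      funext b
      simp only [CoxeterSystem.map_simple, Function.comp_apply]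
    rw [this, Set.range_comp, ← hS, himg]

end CoxPaper
end

section
/- Let (W,S) be a Coxeter system with S connected, 𝒜 a separation of S, A_1, …, A_n ∈ 𝒜 a sequence satisfying the maximal-intersection chain condition, Ā_0 := A_1 ∪ ⋯ ∪ A_n, and A ∈ 𝒜 − {A_1,…,A_n}. Then there exists a subset U_0 ⊆ Ā_0 such that U_0 is a separator of 𝒜 and U_0 separates Ā_0 from A: for the connected components X_1, …, X_t of S − U_0, one has Ā_0 ⊆ X_i ∪ U_0 and A ⊆ X_j ∪ U_0 for some i ≠ j. -/
namespace CoxPaper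

variable {W : Type} [Group W]

section AuxLemmas

variable {W : Type} [Group W]

lemma adj_symm {A : Set W} : Symmetric (Adj A) := by
  rintro s t ⟨hs, ht, hne, hord⟩
  refine ⟨ht, hs, hne.symm, ?_⟩
  have h : SemiconjBy s (t * s) (s * t) := by
    unfold SemiconjBy
    rw [mul_assoc]
  rw [h.orderOf_eq]
  exact hord

lemma comp_subset {A : Set W} (x : W) : Comp A x ⊆ A := fun _ h => h.1

lemma comp_eq_of_mem {A : Set W} {x y : W} (hy : y ∈ Comp A x) :
    Comp A x = Comp A y := by
  ext z
  constructor
  · rintro ⟨hz, hz'⟩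
    exact ⟨hz, ((@Relation.ReflTransGen.stdSymm _ _ ⟨fun _ _ h => adj_symm h⟩).symm _ _ hy.2).trans hz'⟩
  · rintro ⟨hz, hz'⟩
    exact ⟨hz, hy.2.trans hz'⟩

lemma isCC_eq_comp {A X : Set W} (h : IsCC A X) {z : W} (hz : z ∈ X) : X = Comp A z := by
  obtain ⟨x, _, rfl⟩ := h
  exact comp_eq_of_mem hz

lemma isCC_subset {A X : Set W} (h : IsCC A X) : X ⊆ A := by
  obtain ⟨x, _, rfl⟩ := h
  exact comp_subset x

lemma isCC_disjoint {A X Y : Set W} (hX : IsCC A X) (hY : IsCC A Y) (hne : X ≠ Y)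
    {z : W} (hzX : z ∈ X) (hzY : z ∈ Y) : False :=
  hne ((isCC_eq_comp hX hzX).trans (isCC_eq_comp hY hzY).symm)

lemma comp_lift {S U U' : Set W} {p : W} (hd : ∀ y ∈ Comp (S \ U) p, y ∉ U')
    {q : W} (hq : Relation.ReflTransGen (Adj (S \ U)) p q) :
    Relation.ReflTransGen (Adj (S \ U')) p q := by
  induction hq with
  | refl => exact .refl
  | @tail b c hxy hadj ih =>
    obtain ⟨hb, hc, hbc, hord⟩ := hadj
    have hbC : b ∈ Comp (S \ U) p := ⟨hb, hxy⟩
    have hcC : c ∈ Comp (S \ U) p := ⟨hc, hxy.tail ⟨hb, hc, hbc, hord⟩⟩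
    exact ih.tail ⟨⟨hb.1, hd b hbC⟩, ⟨hc.1, hd c hcC⟩, hbc, hord⟩

lemma mem_PU {A : ℕ → Set W} {i : ℕ} {x : W} : x ∈ PU A i ↔ ∃ j, j < i ∧ x ∈ A j := by
  simp [PU]

lemma subset_PU {A : ℕ → Set W} {i j : ℕ} (h : j < i) : A j ⊆ PU A i :=
  fun x hx => mem_PU.2 ⟨j, h, hx⟩

lemma PU_succ (A : ℕ → Set W) (i : ℕ) : PU A (i + 1) = PU A i ∪ A i := by
  ext x
  simp only [mem_PU, Set.mem_union, Nat.lt_succ_iff_lt_or_eq]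
  constructor
  · rintro ⟨j, hj | rfl, hx⟩
    · exact Or.inl ⟨j, hj, hx⟩
    · exact Or.inr hx
  · rintro (⟨j, hj, hx⟩ | hx)
    · exact ⟨j, Or.inl hj, hx⟩
    · exact ⟨i, Or.inr rfl, hx⟩

lemma PU_congr {A B : ℕ → Set W} {i : ℕ} (h : ∀ j, j < i → A j = B j) : PU A i = PU B i := by
  ext x
  simp only [mem_PU]
  constructor
  · rintro ⟨j, hj, hx⟩
    exact ⟨j, hj, (h j hj) ▸ hx⟩
  · rintro ⟨j, hj, hx⟩
    exact ⟨j, hj, (h j hj).symm ▸ hx⟩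

lemma thicken_subset (𝒜 : Set (Set W)) (U X : Set W) : Thicken 𝒜 U X ⊆ X ∪ U := by
  rintro x ⟨A, ⟨_, hA⟩, hx⟩
  exact hA hx

lemma subset_thicken {𝒜 : Set (Set W)} {U X B : Set W} (hB : B ∈ 𝒜) (h : B ⊆ X ∪ U) :
    B ⊆ Thicken 𝒜 U X := fun x hx => ⟨B, ⟨hB, h⟩, hx⟩

lemma mem_eq_of_subset {S : Set W} {𝒜 : Set (Set W)} (hsepn : Separation S 𝒜)
    {B D : Set W} (hB : B ∈ 𝒜) (hD : D ∈ 𝒜) (hBD : B ⊆ D) (hne : B.Nonempty) : B = D := by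
  obtain ⟨x, hx⟩ := hne
  obtain ⟨-, ℬ, hℬ, hBeq⟩ := hsepn.2.1 B hB
  rw [hBeq] at hx
  obtain ⟨M, hM, hxM⟩ := hx
  have hMmax := hℬ M hM
  have hMB : M ⊆ B := hBeq ▸ Set.subset_sUnion_of_mem hM
  obtain ⟨A₀, -, huniq⟩ := hsepn.2.2.1 M hMmax
  exact (huniq B ⟨hB, hMB⟩).trans (huniq D ⟨hD, hMB.trans hBD⟩).symm

lemma key_lemma {S : Set W} (hfin : S.Finite) {𝒜 : Set (Set W)} (hsepn : Separation S 𝒜) :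
    ∀ r : ℕ, ∀ (A : ℕ → Set W) (n : ℕ), 0 < n →
      (∀ i < n, A i ∈ 𝒜) → (∀ i < n, ∀ j < n, A i = A j → i = j) →
      ChainCond 𝒜 A n → ∀ C ∈ 𝒜, (∀ i < n, A i ≠ C) →
      {E | E ∈ 𝒜 ∧ ∀ j < n, A j ≠ E}.ncard ≤ r →
      ∃ U₀, U₀ ⊆ PU A n ∧ IsSeparator S 𝒜 U₀ ∧ SplitsPair S U₀ (PU A n) C := by
  have h𝒜fin : 𝒜.Finite := by
    refine hfin.finite_subsets.subset ?_
    intro B hB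
    have h1 : B ⊆ ⋃₀ 𝒜 := Set.subset_sUnion_of_mem hB
    rw [hsepn.1] at h1
    exact h1
  intro r
  induction r with
  | zero =>
    intro A n hn hmem hinj hchain C hC hCnot hcard
    exfalso
    have hO : ({E | E ∈ 𝒜 ∧ ∀ j < n, A j ≠ E}).Nonempty := ⟨C, hC, hCnot⟩
    have hOfin : ({E | E ∈ 𝒜 ∧ ∀ j < n, A j ≠ E}).Finite :=
      h𝒜fin.subset (fun E hE => hE.1)
    have := (Set.ncard_pos hOfin).2 hO
    omega
  | succ r ih =>
    intro A n hn hmem hinj hchain C hC hCnot hcard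
    have hOfin : ({E | E ∈ 𝒜 ∧ ∀ j < n, A j ≠ E}).Finite :=
      h𝒜fin.subset (fun E hE => hE.1)
    -- choose D with PU A n ∩ D maximal among members outside the chain, above PU A n ∩ C
    have hs'ne : ({E | (E ∈ 𝒜 ∧ ∀ j < n, A j ≠ E) ∧ PU A n ∩ C ⊆ PU A n ∩ E}).Nonempty :=
      ⟨C, ⟨hC, hCnot⟩, subset_rfl⟩
    have hs'fin : ({E | (E ∈ 𝒜 ∧ ∀ j < n, A j ≠ E) ∧ PU A n ∩ C ⊆ PU A n ∩ E}).Finite :=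
      h𝒜fin.subset (fun E hE => hE.1.1)
    obtain ⟨D, ⟨hDO, hCD⟩, hDmax⟩ :=
      Set.Finite.exists_maximalFor (fun E => PU A n ∩ E) _ hs'fin hs'ne
    have hDA : D ∈ 𝒜 := hDO.1
    have hDnot : ∀ j < n, A j ≠ D := hDO.2
    -- the extended chain
    set A' : ℕ → Set W := Function.update A n D with hA'def
    have hA'lt : ∀ j, j < n → A' j = A j := fun j hj =>
      Function.update_of_ne (Nat.ne_of_lt hj) _ _
    have hA'n : A' n = D := Function.update_self _ _ _
    have hPU' : PU A' n = PU A n := PU_congr hA'lt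
    have hmem' : ∀ i < n + 1, A' i ∈ 𝒜 := by
      intro i hi
      rcases Nat.lt_succ_iff_lt_or_eq.1 hi with h | heq
      · rw [hA'lt i h]; exact hmem i h
      · obtain rfl := heq.symm
        rw [hA'n]; exact hDA
    have hinj' : ∀ i < n + 1, ∀ j < n + 1, A' i = A' j → i = j := by
      intro i hi j hj hij
      rcases Nat.lt_succ_iff_lt_or_eq.1 hi with h1 | h1 <;>
        rcases Nat.lt_succ_iff_lt_or_eq.1 hj with h2 | h2
      · exact hinj i h1 j h2 (by rwa [hA'lt i h1, hA'lt j h2] at hij)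
      · rw [hA'lt i h1, h2, hA'n] at hij
        exact absurd hij (hDnot i h1)
      · rw [hA'lt j h2, h1, hA'n] at hij
        exact absurd hij.symm (hDnot j h2)
      · omega
    have hchain' : ChainCond 𝒜 A' (n + 1) := by
      intro i hi0 hi C' hC' hC'not
      rcases Nat.lt_succ_iff_lt_or_eq.1 hi with h | heq
      · have hPUi : PU A' i = PU A i := PU_congr (fun j hj => hA'lt j (hj.trans h))
        rw [hPUi, hA'lt i h]
        exact hchain i hi0 h C' hC'
          (fun j hj => by rw [← hA'lt j (hj.trans h)]; exact hC'not j hj)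
      · obtain rfl := heq.symm
        rw [hPU', hA'n]
        intro hss
        have hC'O : (C' ∈ 𝒜 ∧ ∀ j < n, A j ≠ C') :=
          ⟨hC', fun j hj => by rw [← hA'lt j hj]; exact hC'not j hj⟩
        have hC'mem : C' ∈ {E | (E ∈ 𝒜 ∧ ∀ j < n, A j ≠ E) ∧ PU A n ∩ C ⊆ PU A n ∩ E} :=
          ⟨hC'O, hCD.trans hss.subset⟩
        exact hss.2 (hDmax hC'mem hss.subset)
    -- apply SepCond4 to get the separator Uₙ = PU A n ∩ D
    have hsep4 := hsepn.2.2.2 A' (n + 1) hmem' hinj' hchain' n hn (Nat.lt_succ_self n)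
    rw [hPU', hA'n] at hsep4
    obtain ⟨hUsep, hsplit⟩ := hsep4
    obtain ⟨Y₁, Y₂, hY₁, hY₂, hY₁₂, hPUY₁, hDY₂⟩ := hsplit
    -- trivial case : C empty
    rcases eq_or_ne C ∅ with rfl | hCne'
    · exact ⟨PU A n ∩ D, Set.inter_subset_left, hUsep, Y₁, Y₂, hY₁, hY₂, hY₁₂, hPUY₁,
        (Set.empty_subset _)⟩
    -- trivial case : D = C
    rcases eq_or_ne D C with rfl | hDC
    · exact ⟨PU A n ∩ D, Set.inter_subset_left, hUsep, Y₁, Y₂, hY₁, hY₂, hY₁₂, hPUY₁, hDY₂⟩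
    -- locate C relative to Uₙ using condition (iii)
    obtain ⟨YC, ⟨hYCcc, hYCth⟩, -⟩ := hUsep.2.2.1 C hC
    have hCY : C ⊆ YC ∪ (PU A n ∩ D) := hYCth.trans (thicken_subset 𝒜 _ YC)
    by_cases hYC1 : YC = Y₁
    case neg =>
      exact ⟨PU A n ∩ D, Set.inter_subset_left, hUsep, Y₁, YC, hY₁, hYCcc,
        fun h => hYC1 h.symm, hPUY₁, hCY⟩
    rw [hYC1] at hCY
    -- recurse with the extended chain
    have hCnot' : ∀ i < n + 1, A' i ≠ C := by
      intro i hi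
      rcases Nat.lt_succ_iff_lt_or_eq.1 hi with h | heq
      · rw [hA'lt i h]; exact hCnot i h
      · obtain rfl := heq.symm
        rw [hA'n]; exact hDC
    have hcard' : {E | E ∈ 𝒜 ∧ ∀ j < n + 1, A' j ≠ E}.ncard ≤ r := by
      have hEq : {E | E ∈ 𝒜 ∧ ∀ j < n + 1, A' j ≠ E} =
          {E | E ∈ 𝒜 ∧ ∀ j < n, A j ≠ E} \ {D} := by
        ext E
        simp only [Set.mem_setOf_eq, Set.mem_diff, Set.mem_singleton_iff]
        constructor
        · rintro ⟨hE, hA'E⟩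
          refine ⟨⟨hE, ?_⟩, ?_⟩
          · intro j hj
            rw [← hA'lt j hj]
            exact hA'E j (hj.trans (Nat.lt_succ_self n))
          · intro h
            exact hA'E n (Nat.lt_succ_self n) (hA'n.trans h.symm)
        · rintro ⟨⟨hE, hAE⟩, hED⟩
          refine ⟨hE, fun j hj => ?_⟩
          rcases Nat.lt_succ_iff_lt_or_eq.1 hj with h | heq
          · rw [hA'lt j h]; exact hAE j h
          · obtain rfl := heq.symm
            rw [hA'n]; exact fun h => hED h.symm
      have hDO' : D ∈ {E | E ∈ 𝒜 ∧ ∀ j < n, A j ≠ E} := hDO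
      rw [hEq, Set.ncard_diff_singleton_of_mem hDO']
      have h1 : 1 ≤ ({E | E ∈ 𝒜 ∧ ∀ j < n, A j ≠ E}).ncard :=
        (Set.ncard_pos hOfin).2 ⟨D, hDO'⟩
      omega
    obtain ⟨U', hU'sub, hU'sep, X₁, X₂, hX₁, hX₂, hX₁₂, hPUX₁, hCX₂⟩ :=
      ih A' (n + 1) (Nat.succ_pos n) hmem' hinj' hchain' C hC hCnot' hcard'
    have hPUsucc : PU A' (n + 1) = PU A n ∪ D := by
      rw [PU_succ, hPU', hA'n]
    rw [hPUsucc] at hU'sub hPUX₁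
    -- pull the separator back using condition (v)
    have hPUth : PU A' (n + 1) ⊆ Thicken 𝒜 U' X₁ := by
      intro x hx
      obtain ⟨j, hj, hxj⟩ := mem_PU.1 hx
      refine subset_thicken (hmem' j hj) ?_ hxj
      refine (subset_PU hj).trans ?_
      rw [hPUsucc]
      exact hPUX₁
    have hU'th : U' ⊆ Thicken 𝒜 U' X₁ := by
      refine hU'sub.trans ?_
      rw [← hPUsucc]
      exact hPUth
    obtain ⟨i, hi, hUAi⟩ := hU'sep.2.2.2.2 X₁ hX₁ A' (n + 1) (Nat.succ_pos n) hmem' hinj'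
      hchain' (Set.inter_subset_left.trans (by rw [hPUsucc]; exact hU'sub)) hPUth
    have hU'Ai : U' ⊆ A' i := fun x hx => hUAi ⟨hx, hU'th hx⟩
    rcases Nat.lt_succ_iff_lt_or_eq.1 hi with h | heq
    · rw [hA'lt i h] at hU'Ai
      exact ⟨U', hU'Ai.trans (subset_PU h), hU'sep, X₁, X₂, hX₁, hX₂, hX₁₂,
        Set.subset_union_left.trans hPUX₁, hCX₂⟩
    -- the impossible case : U' ⊆ D with C on the near side of Uₙ
    obtain rfl := heq.symm
    exfalso
    rw [hA'n] at hU'Ai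
    have hY₁sub : Y₁ ⊆ S \ (PU A n ∩ D) := isCC_subset hY₁
    have haY₁U' : ∀ y ∈ Y₁, y ∉ U' := by
      intro y hy hyU'
      rcases hDY₂ (hU'Ai hyU') with h2 | h2
      · exact isCC_disjoint hY₁ hY₂ hY₁₂ hy h2
      · exact (hY₁sub hy).2 h2
    have hPUne : (PU A n).Nonempty := by
      by_contra h
      rw [Set.not_nonempty_iff_eq_empty] at h
      have h2 := hUsep.1.1
      rw [h, Set.empty_inter] at h2
      exact Set.not_nonempty_empty h2
    have hpY₁ : ∃ p ∈ PU A n, p ∈ Y₁ := by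
      by_contra h
      push_neg at h
      have hPUD : PU A n ⊆ D := by
        intro x hx
        rcases hPUY₁ hx with h1 | h1
        · exact absurd h1 (h x hx)
        · exact h1.2
      obtain ⟨x, hx⟩ := hPUne
      obtain ⟨j, hj, hxj⟩ := mem_PU.1 hx
      exact hDnot j hj
        (mem_eq_of_subset hsepn (hmem j hj) hDA ((subset_PU hj).trans hPUD) ⟨x, hxj⟩)
    obtain ⟨p, hpPU, hpY₁⟩ := hpY₁
    have hpU' : p ∉ U' := haY₁U' p hpY₁
    have hpX₁ : p ∈ X₁ := by
      rcases hPUX₁ (Or.inl hpPU) with h1 | h1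
      · exact h1
      · exact absurd h1 hpU'
    have hY₁eq : Y₁ = Comp (S \ (PU A n ∩ D)) p := isCC_eq_comp hY₁ hpY₁
    have hX₁eq : X₁ = Comp (S \ U') p := isCC_eq_comp hX₁ hpX₁
    have hY₁X₁ : Y₁ ⊆ X₁ := by
      intro q hq
      rw [hY₁eq] at hq
      rw [hX₁eq]
      refine ⟨⟨hq.1.1, ?_⟩, comp_lift ?_ hq.2⟩
      · refine haY₁U' q ?_
        rw [hY₁eq]; exact hq
      · intro y hy
        refine haY₁U' y ?_
        rw [hY₁eq]; exact hy
    have hCU : C ⊆ PU A n ∩ D := by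
      intro x hx
      rcases hCY hx with h1 | h1
      · exfalso
        rcases hCX₂ hx with h2 | h2
        · exact isCC_disjoint hX₁ hX₂ hX₁₂ (hY₁X₁ h1) h2
        · exact haY₁U' x h1 h2
      · exact h1
    exact hDC (mem_eq_of_subset hsepn hC hDA (hCU.trans Set.inter_subset_right)
      (Set.nonempty_iff_ne_empty.2 hCne')).symm

end AuxLemmas

theorem statement_15 {B : Type} {W : Type} [Group W] {M : CoxeterMatrix B}
    (cs : CoxeterSystem M W) (S : Set W) (hS : S = Set.range cs.simple)
    (hconn : Conn S) (hfin : S.Finite)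
    (𝒜 : Set (Set W)) (hsepn : Separation S 𝒜)
    (A : ℕ → Set W) (n : ℕ) (hn : 0 < n)
    (hmem : ∀ i < n, A i ∈ 𝒜)
    (hinj : ∀ i < n, ∀ j < n, A i = A j → i = j)
    (hchain : ChainCond 𝒜 A n)
    (C : Set W) (hC : C ∈ 𝒜) (hCnot : ∀ i < n, A i ≠ C) :
    ∃ U₀, U₀ ⊆ PU A n ∧ IsSeparator S 𝒜 U₀ ∧ SplitsPair S U₀ (PU A n) C := by
  exact key_lemma hfin hsepn {E | E ∈ 𝒜 ∧ ∀ j < n, A j ≠ E}.ncard A n hn hmem hinj hchain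
    C hC hCnot le_rfl

end CoxPaper
end
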